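/- For every b ≥ 2, the partition (b, b, 1) of 2b+1 satisfies |η_{(b,b,1)}| ≤ D_{b+1} + b·D_b, with equality if and only if b = 2. -/

import Mathlib

/-- Derangement numbers: `D 0 = 1`, `D (m+1) = (m+1) * D m + (-1)^(m+1)`. -/
def derange : ℕ → ℤ
  | 0 => 1
  | n + 1 => (n + 1 : ℤ) * derange n + (-1) ^ (n + 1)

/-- Subtract one from every part and discard the parts that become zero
(deleting the first column of the Ferrers diagram). -/
def strip (l : List ℕ) : List ℕ := (l.map (· - 1)).filter (fun x => 0 < x)

lemma strip_measure (l : List ℕ) : (strip l).sum + (strip l).length ≤ l.sum := by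
  induction l with
  | nil => simp [strip]
  | cons x t ih =>
      simp only [strip, List.map_cons, List.filter_cons] at ih ⊢
      by_cases hx : 0 < x - 1 <;> simp [hx] <;> omega

/-- The eigenvalues of the derangement graph, defined by Renteln's recurrence:
`η ∅ = 1` and `η λ = (-1)^h (η (λ-ĥ) + (-1)^{λ₁} h η (λ-ĉ))`, where
`h = λ₁ + r - 1` is the hook size, `λ-ĥ = strip (tail λ)` removes the hook,
and `λ-ĉ = strip λ` removes the first column. -/
def eta : List ℕ → ℤ
  | [] => 1
  | a :: t =>
      (-1) ^ (a + t.length) *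
        (eta (strip t) + (-1) ^ a * ((a : ℤ) + t.length) * eta (strip (a :: t)))
  termination_by l => l.sum + l.length
  decreasing_by
  · have h1 := strip_measure t
    simp only [List.sum_cons, List.length_cons]
    omega
  · have h1 := strip_measure (a :: t)
    simp only [List.sum_cons, List.length_cons] at h1 ⊢
    omega

/-- `l` is (the list of parts of) a partition of `n`: weakly decreasing,
all parts positive, summing to `n`. -/
def IsPartition (n : ℕ) (l : List ℕ) : Prop :=
  l.Pairwise (· ≥ ·) ∧ (∀ x ∈ l, 0 < x) ∧ l.sum = n

/-- The hook partition `(a, 1^(n-a))` of `n`. -/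
def hookP (n a : ℕ) : List ℕ := a :: List.replicate (n - a) 1

/-! Renteln's recurrence evaluates `η` on `(b)`, `(b, b)` and `(b, b, 1)` in closed form, giving
`|η_{(b,b,1)}| = (b + 1) D_{b-1} + (b + 2) D_b`. Since `D_{b+1} = b (D_{b-1} + D_b)`, the bound
minus `|η_{(b,b,1)}|` equals `(b - 2) D_b - D_{b-1}`, which vanishes at `b = 2` (as `D_1 = 0`)
and is positive for `b ≥ 3`, where `D_{b-1} < D_b`. -/

lemma derange_eq_numDerangements (n : ℕ) : derange n = numDerangements n := by
  induction n with
  | zero => rfl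
  | succ n ih => rw [derange, ih, numDerangements_succ]; ring

lemma numDerangements_add_two_pos (n : ℕ) : 0 < numDerangements (n + 2) := by
  induction n with
  | zero => decide
  | succ n ih => rw [numDerangements_add_two]; positivity

lemma numDerangements_add_one_lt_mul {m : ℕ} (hm : 1 ≤ m) :
    numDerangements (m + 1) < m * numDerangements (m + 2) := by
  obtain ⟨k, rfl⟩ := Nat.exists_eq_add_of_le' hm
  have hpos := numDerangements_add_two_pos k
  calc numDerangements (k + 2) < numDerangements (k + 3) := by
        rw [numDerangements_add_two (k + 1)]; nlinarith
    _ ≤ (k + 1) * numDerangements (k + 3) := Nat.le_mul_of_pos_left _ k.succ_pos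

@[simp] lemma eta_nil : eta [] = 1 := by rw [eta]

@[simp] lemma strip_nil : strip [] = [] := rfl

@[simp] lemma strip_cons_one (t : List ℕ) : strip (1 :: t) = strip t := by simp [strip]

@[simp] lemma strip_cons_add_two (k : ℕ) (t : List ℕ) :
    strip ((k + 2) :: t) = (k + 1) :: strip t := by
  simp [strip]

lemma eta_strip_singleton (n : ℕ) : eta (strip [n + 1]) = eta [n] := by
  cases n with
  | zero => simp [eta]
  | succ k => simp

lemma eta_singleton (n : ℕ) : eta [n] = derange n := by
  induction n with
  | zero => simp [eta, derange]
  | succ n ih =>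
    rw [eta, eta_strip_singleton, ih, derange]
    rcases neg_one_pow_eq_or ℤ n with h | h <;>
      simp only [List.length_nil, strip_nil, eta_nil, pow_succ, h] <;> push_cast <;> ring

lemma eta_pair (n : ℕ) :
    eta [n + 1, n + 1] = (-1) ^ (n + 1) * (derange (n + 1) + derange (n + 2)) := by
  induction n with
  | zero => simp [eta, derange]
  | succ k ih =>
    rw [eta]
    simp only [strip_cons_add_two, strip_nil, List.length_cons, List.length_nil, ih, eta_singleton]
    rcases neg_one_pow_eq_or ℤ k with h | h <;>
      simp only [derange, pow_succ, h] <;> push_cast <;> ring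

lemma eta_bb1 (m : ℕ) : eta [m + 2, m + 2, 1] =
    (-1) ^ m * (derange (m + 1) - ((m : ℤ) + 4) * (derange (m + 1) + derange (m + 2))) := by
  rw [eta]
  simp only [strip_cons_add_two, strip_cons_one, strip_nil, List.length_cons, List.length_nil,
    eta_pair, eta_singleton]
  rcases neg_one_pow_eq_or ℤ m with h | h <;> simp only [pow_succ, h] <;> push_cast <;> ring

lemma abs_eta_bb1 (m : ℕ) : |eta [m + 2, m + 2, 1]| =
    (m + 3) * numDerangements (m + 1) + (m + 4) * numDerangements (m + 2) := by
  rw [eta_bb1, abs_mul, abs_neg_one_pow, one_mul, derange_eq_numDerangements,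
    derange_eq_numDerangements, abs_of_nonpos (by nlinarith)]
  ring

/-- For `b ≥ 2`, `|η_{(b,b,1)}| ≤ D_{b+1} + b D_b`, with equality iff `b = 2`. -/
theorem eta_abs_bb1_upper (b : ℕ) (hb : 2 ≤ b) :
    |eta [b, b, 1]| ≤ derange (b + 1) + (b : ℤ) * derange b ∧
    (|eta [b, b, 1]| = derange (b + 1) + (b : ℤ) * derange b ↔ b = 2) := by
  obtain ⟨m, rfl⟩ := Nat.exists_eq_add_of_le' hb
  have hgap : derange (m + 2 + 1) + ((m + 2 : ℕ) : ℤ) * derange (m + 2) =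
      |eta [m + 2, m + 2, 1]| + (m * numDerangements (m + 2) - numDerangements (m + 1) : ℤ) := by
    rw [abs_eta_bb1, derange_eq_numDerangements, derange_eq_numDerangements,
      numDerangements_add_two (m + 1)]
    push_cast; ring
  rcases Nat.eq_zero_or_pos m with rfl | hm
  · norm_num at hgap ⊢
    exact ⟨hgap.ge, hgap.symm⟩
  · have hlt : (numDerangements (m + 1) : ℤ) < m * numDerangements (m + 2) := by
      exact_mod_cast numDerangements_add_one_lt_mul hm
    refine ⟨by linarith, fun h => by linarith, fun h => by omega⟩
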